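/- arXiv:1302.1699 — 2 statements merged into one kernel-verified Lean document; each statement's English description precedes it below -/
import Mathlib

section
/- If ξ is a standard Gaussian vector in R^p, then for every x > 0, P(‖ξ‖² > p + max(√(κ·x·p), κ·x)) ≤ exp(-x), where κ = 6.6. -/
open MeasureTheory ProbabilityTheory Real

/-!
Chernoff bound for `S = ‖ξ‖²`: since `𝔼 exp (l S) = (1 - 2 l) ^ (-p / 2)`, optimising over `l`
gives `P (S ≥ p (1 + u)) ≤ exp (-(p / 2) (u - log (1 + u)))` for `u ≥ 0`. With `c = κ x / p`
and `u = max (√c) c` the threshold `p (1 + u)` is `p + max (√(κ x p)) (κ x)`, and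
`u - log (1 + u) ≥ 10 c / 33` (from `log (1 + u) ≤ u - 10 u² / 33` on `[0, 1]` and
`log (1 + u) ≤ 23 u / 33` for `u ≥ 1`), so the exponent is at most `-(κ / 2) (10 / 33) x = -x`.
-/

namespace ProbabilityTheory

lemma gaussianPDFReal_zero_one_mul_exp_mul_sq (l y : ℝ) :
    gaussianPDFReal 0 1 y * exp (l * y ^ 2) = (√(2 * π))⁻¹ * exp (-(1 / 2 - l) * y ^ 2) := by
  simp only [gaussianPDFReal, NNReal.coe_one, mul_one, sub_zero]
  rw [mul_assoc, ← exp_add]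
  ring_nf

lemma integrable_exp_mul_sq_gaussianReal {l : ℝ} (hl : l < 1 / 2) :
    Integrable (fun y ↦ exp (l * y ^ 2)) (gaussianReal 0 1) := by
  rw [gaussianReal_of_var_ne_zero 0 one_ne_zero, integrable_withDensity_iff_integrable_smul'
    (measurable_gaussianPDF 0 1) (ae_of_all _ fun _ ↦ gaussianPDF_lt_top)]
  simp_rw [toReal_gaussianPDF, smul_eq_mul, gaussianPDFReal_zero_one_mul_exp_mul_sq]
  exact (integrable_exp_neg_mul_sq (by linarith)).const_mul _

-- For `l ≥ 1 / 2` both sides are junk zeros.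
lemma integral_exp_mul_sq_gaussianReal (l : ℝ) :
    ∫ y, exp (l * y ^ 2) ∂gaussianReal 0 1 = (√(1 - 2 * l))⁻¹ := by
  simp_rw [integral_gaussianReal_eq_integral_smul one_ne_zero, smul_eq_mul,
    gaussianPDFReal_zero_one_mul_exp_mul_sq]
  rw [integral_const_mul, integral_gaussian, ← sqrt_inv,
    ← sqrt_mul (inv_nonneg.mpr (by positivity)), ← sqrt_inv]
  congr 1
  field_simp

variable {ι : Type*} [Fintype ι]

lemma exp_mul_sum_sq_eq_prod (l : ℝ) (y : ι → ℝ) :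
    exp (l * ∑ i, y i ^ 2) = ∏ i, exp (l * y i ^ 2) := by
  rw [Finset.mul_sum, exp_sum]

lemma integrable_exp_mul_sum_sq_pi_gaussianReal {l : ℝ} (hl : l < 1 / 2) :
    Integrable (fun y : ι → ℝ ↦ exp (l * ∑ i, y i ^ 2))
      (Measure.pi fun _ ↦ gaussianReal 0 1) := by
  simp_rw [exp_mul_sum_sq_eq_prod]
  exact .fintype_prod fun _ ↦ integrable_exp_mul_sq_gaussianReal hl

lemma mgf_sum_sq_pi_gaussianReal (l : ℝ) :
    mgf (fun y : ι → ℝ ↦ ∑ i, y i ^ 2) (Measure.pi fun _ ↦ gaussianReal 0 1) l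
      = (√(1 - 2 * l))⁻¹ ^ Fintype.card ι := by
  simp_rw [mgf, exp_mul_sum_sq_eq_prod]
  rw [integral_fintype_prod_eq_pow (fun z : ℝ ↦ exp (l * z ^ 2)),
    integral_exp_mul_sq_gaussianReal]

lemma pi_gaussianReal_setOf_le_sum_sq_le {u : ℝ} (hu : 0 ≤ u) :
    (Measure.pi fun _ : ι ↦ gaussianReal 0 1) {y | Fintype.card ι * (1 + u) ≤ ∑ i, y i ^ 2}
      ≤ ENNReal.ofReal (exp (-(Fintype.card ι / 2) * (u - log (1 + u)))) := by
  have hu1 : 0 < 1 + u := by linarith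
  -- `l` minimises the Chernoff bound `exp (-l n (1 + u)) (1 - 2 l) ^ (-n / 2)`
  set l := u / (2 * (1 + u)) with hl_def
  have hl : 1 - 2 * l = (1 + u)⁻¹ := by
    rw [hl_def]
    field_simp
    ring
  have hl_lt : l < 1 / 2 := by linarith [inv_pos.mpr hu1]
  have chernoff := measure_ge_le_exp_mul_mgf (Fintype.card ι * (1 + u)) (by positivity : 0 ≤ l)
    (integrable_exp_mul_sum_sq_pi_gaussianReal (ι := ι) hl_lt)
  rw [mgf_sum_sq_pi_gaussianReal, hl, sqrt_inv, inv_inv] at chernoff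
  rw [ENNReal.le_ofReal_iff_toReal_le (measure_ne_top _ _) (exp_nonneg _)]
  refine chernoff.trans_eq ?_
  rw [← exp_log (pow_pos (sqrt_pos.mpr hu1) _), log_pow, log_sqrt hu1.le, ← exp_add, hl_def]
  congr 1
  field_simp
  ring

end ProbabilityTheory

namespace Real

-- `exp` dominates its Taylor polynomial of degree 4, which dominates `1 + u` on `[0, 1]`.
lemma log_one_add_le_sub_mul_sq_of_le_one {u : ℝ} (hu0 : 0 ≤ u) (hu1 : u ≤ 1) :
    log (1 + u) ≤ u - 10 / 33 * u ^ 2 := by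
  rw [log_le_iff_le_exp (by linarith)]
  refine le_trans ?_ (sum_le_exp_of_nonneg (by nlinarith) 5)
  simp only [Finset.sum_range_succ, Finset.sum_range_zero, Nat.factorial]
  push_cast
  have h1u := sub_nonneg.2 hu1
  nlinarith [mul_nonneg (pow_nonneg hu0 2) (pow_nonneg h1u 6),
    mul_nonneg (pow_nonneg hu0 3) (pow_nonneg h1u 5),
    mul_nonneg (pow_nonneg hu0 4) (pow_nonneg h1u 4),
    mul_nonneg (pow_nonneg hu0 5) (pow_nonneg h1u 3),
    mul_nonneg (pow_nonneg hu0 6) (pow_nonneg h1u 2),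
    mul_nonneg (pow_nonneg hu0 7) h1u, pow_nonneg hu0 8]

lemma log_one_add_le_mul_of_one_le {u : ℝ} (hu : 1 ≤ u) : log (1 + u) ≤ 23 / 33 * u := by
  have h : log (1 + u) = log 2 + log ((1 + u) / 2) := by
    rw [← log_mul two_ne_zero (by positivity)]
    ring_nf
  have := log_le_sub_one_of_pos (by positivity : 0 < (1 + u) / 2)
  linarith [log_two_lt_d9]

lemma mul_le_max_sqrt_sub_log_one_add {c : ℝ} (hc : 0 ≤ c) :
    10 / 33 * c ≤ max √c c - log (1 + max √c c) := by
  have hsq : √c ^ 2 = c := sq_sqrt hc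
  rcases le_total c 1 with hc1 | hc1
  · have hs1 : √c ≤ 1 := sqrt_le_one.2 hc1
    rw [max_eq_left (by nlinarith [sqrt_nonneg c])]
    linarith [log_one_add_le_sub_mul_sq_of_le_one (sqrt_nonneg c) hs1]
  · rw [max_eq_right (by nlinarith [sqrt_nonneg c])]
    linarith [log_one_add_le_mul_of_one_le hc1]

end Real

theorem gaussian_quadratic_deviation_quantile_general
    {Ω : Type*} [MeasureSpace Ω] (P : Measure Ω)
    {p : ℕ} (hp : 0 < p) (ξ : Ω → Fin p → ℝ) (hξ : Measurable ξ)
    (hlaw : Measure.map ξ P = Measure.pi fun _ : Fin p => gaussianReal 0 1)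
    (x : ℝ) (hx : 0 < x) :
    P {ω | (p : ℝ) + max (Real.sqrt (6.6 * x * p)) (6.6 * x) < ∑ i, ξ ω i ^ 2}
      ≤ ENNReal.ofReal (Real.exp (-x)) := by
  have hp' : (0 : ℝ) < p := Nat.cast_pos.mpr hp
  set c := 6.6 * x / p with hc_def
  have hc : 0 ≤ c := by positivity
  have hpc : p * c = 6.6 * x := by
    rw [hc_def]
    field_simp
  set u := max √c c
  have threshold : (p : ℝ) + max √(6.6 * x * p) (6.6 * x) = p * (1 + u) := by
    have hsqrt : √(6.6 * x * p) = p * √c := by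
      rw [show 6.6 * x * p = p ^ 2 * c by rw [← hpc]; ring, sqrt_mul (sq_nonneg _),
        sqrt_sq hp'.le]
    rw [hsqrt, ← hpc, ← mul_max_of_nonneg _ _ hp'.le]
    ring
  have exponent : -(p / 2 : ℝ) * (u - log (1 + u)) ≤ -x := by
    have := mul_le_mul_of_nonneg_left (mul_le_max_sqrt_sub_log_one_add hc) (half_pos hp').le
    linarith
  have hS : Measurable fun y : Fin p → ℝ ↦ ∑ i, y i ^ 2 := by fun_prop
  calc P {ω | (p : ℝ) + max √(6.6 * x * p) (6.6 * x) < ∑ i, ξ ω i ^ 2}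
      = Measure.map ξ P {y | p * (1 + u) < ∑ i, y i ^ 2} := by
        rw [threshold, Measure.map_apply hξ (measurableSet_lt measurable_const hS)]
        rfl
    _ ≤ (Measure.pi fun _ : Fin p ↦ gaussianReal 0 1) {y | p * (1 + u) ≤ ∑ i, y i ^ 2} := by
        rw [hlaw]
        exact measure_mono (Set.ofPred_subset_ofPred.2 fun _ ↦ le_of_lt)
    _ ≤ ENNReal.ofReal (exp (-(p / 2) * (u - log (1 + u)))) := by
        simpa only [Fintype.card_fin] using
          pi_gaussianReal_setOf_le_sum_sq_le (ι := Fin p) (le_max_of_le_right hc)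
    _ ≤ ENNReal.ofReal (exp (-x)) := ENNReal.ofReal_le_ofReal (exp_le_exp.2 exponent)

theorem gaussian_quadratic_deviation_quantile
    {Ω : Type*} [MeasureSpace Ω] (P : Measure Ω) [IsProbabilityMeasure P]
    {p : ℕ} (hp : 0 < p) (ξ : Ω → Fin p → ℝ) (hξ : Measurable ξ)
    (hlaw : Measure.map ξ P = Measure.pi fun _ : Fin p => gaussianReal 0 1)
    (x : ℝ) (hx : 0 < x) :
    P {ω | (p : ℝ) + max (Real.sqrt (6.6 * x * p)) (6.6 * x) < ∑ i, ξ ω i ^ 2}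
      ≤ ENNReal.ofReal (Real.exp (-x)) :=
  gaussian_quadratic_deviation_quantile_general P hp ξ hξ hlaw x hx
end

section
/- Let a₁,...,a_p be reals in [0,1] with Σaᵢ = 𝚙 and 2Σaᵢ² = 𝚟². Then for every μ ∈ [0, 2/3] and every u > 0, μ(𝚙+u) + Σᵢ log(1 - μaᵢ) ≥ μu - μ²𝚟²/2. -/
lemma key_log_ineq (x : ℝ) (hx0 : 0 ≤ x) (hx1 : x ≤ 2/3) :
    -x - x^2 ≤ Real.log (1 - x) := by
  have h1 : (0:ℝ) < 1 - x := by linarith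
  rw [Real.le_log_iff_exp_le h1]
  set t : ℝ := x + x^2 with ht
  have ht0 : 0 ≤ t := by positivity
  have hP : 1 + t + t^2/2 + t^3/6 + t^4/24 ≤ Real.exp t := by
    have := Real.sum_le_exp_of_nonneg ht0 5
    simp [Finset.sum_range_succ, Nat.factorial] at this
    linarith [this]
  have hPpos : (0:ℝ) < 1 + t + t^2/2 + t^3/6 + t^4/24 := by positivity
  have hE : (0:ℝ) < Real.exp t := Real.exp_pos t
  rw [show -x - x^2 = -t by rw [ht]; ring, Real.exp_neg]
  rw [inv_le_iff_one_le_mul₀ hE]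
  have hpoly : 1 ≤ (1 - x) * (1 + t + t^2/2 + t^3/6 + t^4/24) := by
    rw [ht]
    nlinarith [sq_nonneg x, sq_nonneg (x - 1/2), pow_nonneg hx0 3, pow_nonneg hx0 4,
      mul_nonneg hx0 (sub_nonneg.2 hx1), sq_nonneg (x*(2/3 - x)), pow_nonneg hx0 5,
      mul_nonneg (pow_nonneg hx0 4) (sub_nonneg.2 hx1),
      mul_nonneg (pow_nonneg hx0 5) (sub_nonneg.2 hx1),
      mul_nonneg (pow_nonneg hx0 6) (sub_nonneg.2 hx1),
      mul_nonneg (pow_nonneg hx0 7) (sub_nonneg.2 hx1)]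
  nlinarith [mul_le_mul_of_nonneg_left hP (le_of_lt h1)]

theorem eigenvalue_log_inequality
    {p : ℕ} (a : Fin p → ℝ) (ha0 : ∀ i, 0 ≤ a i) (ha1 : ∀ i, a i ≤ 1)
    (pp vv : ℝ) (hp : ∑ i, a i = pp) (hv : 2 * ∑ i, (a i) ^ 2 = vv ^ 2)
    (μ : ℝ) (hμ0 : 0 ≤ μ) (hμ1 : μ ≤ 2 / 3) (u : ℝ) (hu : 0 < u) :
    μ * (pp + u) + ∑ i, Real.log (1 - μ * a i) ≥ μ * u - μ ^ 2 * vv ^ 2 / 2 := by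
  have hterm : ∀ i, -(μ * a i) - (μ * a i)^2 ≤ Real.log (1 - μ * a i) := by
    intro i
    apply key_log_ineq
    · exact mul_nonneg hμ0 (ha0 i)
    · calc μ * a i ≤ μ * 1 := mul_le_mul_of_nonneg_left (ha1 i) hμ0
        _ = μ := mul_one μ
        _ ≤ 2/3 := hμ1
  have hsum : ∑ i, (-(μ * a i) - (μ * a i)^2) ≤ ∑ i, Real.log (1 - μ * a i) :=
    Finset.sum_le_sum fun i _ => hterm i
  have hsum2 : ∑ i, (-(μ * a i) - (μ * a i)^2)
      = -(μ * ∑ i, a i) - μ^2 * ∑ i, (a i)^2 := by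
    rw [Finset.mul_sum, Finset.mul_sum, ← Finset.sum_neg_distrib, ← Finset.sum_sub_distrib]
    exact Finset.sum_congr rfl fun i _ => by ring
  have h2 : μ^2 * vv^2 / 2 = μ^2 * ∑ i, (a i)^2 := by rw [← hv]; ring
  rw [← hp, h2]
  rw [hsum2] at hsum
  linarith
end
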